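/- arXiv:1912.00456 — 2 statements merged into one kernel-verified Lean document; each statement's English description precedes it below -/
import Mathlib

section
/- Let G be a group acting faithfully on a finite set Ω of size n, and suppose Ω = Γ₁ ∪ Γ₂ is a disjoint union of nonempty G-invariant subsets with |Γ₁| = n₁ and |Γ₂| = n₂ (so n₁ + n₂ = n). If a(H) ≤ 2^(m-1) holds for every group H acting faithfully on a set of size m < n, then a(G) ≤ 2^(n₁-1) · 2^(n₂-1) = 2^(n-2). -/
open scoped Pointwise

/-- A composition series of a group `G`: a finite chain of subgroups from `⊥` to `⊤`
in which each term is normal in the next with simple quotient. -/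
structure CompositionSeries' (G : Type*) [Group G] where
  len : ℕ
  s : Fin (len + 1) → Subgroup G
  bot_eq : s 0 = ⊥
  top_eq : s (Fin.last len) = ⊤
  le_succ : ∀ i : Fin len, s i.castSucc ≤ s i.succ
  normal : ∀ i : Fin len, ((s i.castSucc).subgroupOf (s i.succ)).Normal
  simple : ∀ i : Fin len,
    haveI := normal i
    IsSimpleGroup (↥(s i.succ) ⧸ (s i.castSucc).subgroupOf (s i.succ))

/-- The product of the orders of the composition factors of odd order of a
composition series. -/
noncomputable def aProd {G : Type*} [Group G] (c : CompositionSeries' G) : ℕ :=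
  ∏ i : Fin c.len,
    if Odd (Nat.card (↥(c.s i.succ) ⧸ (c.s i.castSucc).subgroupOf (c.s i.succ))) then
      Nat.card (↥(c.s i.succ) ⧸ (c.s i.castSucc).subgroupOf (c.s i.succ))
    else 1

/-!
Let `K` be the kernel of the action of `G` on `Γ₁`. Then `G ⧸ K` acts faithfully on `Γ₁` and `K`
acts faithfully on `Γ₂`, so the hypothesis bounds `a(G ⧸ K)` by `2 ^ (n₁ - 1)` and `a(K)` by
`2 ^ (n₂ - 1)`. It remains to see `a(G) = a(K) · a(G ⧸ K)` along a given composition series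
`(Sᵢ)` of `G`: for each factor `Sᵢ₊₁ / Sᵢ`, simplicity forces either `Sᵢ₊₁ ⊓ K ≤ Sᵢ` or
`Sᵢ₊₁ ≤ Sᵢ K`, so exactly one of the induced factors `(Sᵢ₊₁ ⊓ K) / (Sᵢ ⊓ K)` and
`Sᵢ₊₁ K / Sᵢ K` is isomorphic to `Sᵢ₊₁ / Sᵢ` and the other is trivial. Deleting the repetitions
from the two induced chains gives composition series of `K` and of `G ⧸ K`.
-/

open QuotientGroup

namespace Fin

variable {α : Type*} {l : ℕ} (t : Fin (l + 2) → α) (i : Fin (l + 1))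

theorem removeNth_succ_castSucc_of_eq (h : t i.castSucc = t i.succ) (j : Fin l) :
    removeNth i.succ t j.castSucc = t (i.succAbove j).castSucc := by
  rcases lt_trichotomy j.castSucc i with hj | rfl | hj
  · rw [removeNth_apply, succAbove_of_castSucc_lt _ _ (castSucc_lt_succ.trans'
      (castSucc_lt_castSucc_iff.mpr hj)), succAbove_of_castSucc_lt _ _ hj]
  · rw [removeNth_apply, succAbove_succ_self, succAbove_castSucc_self, h, succ_castSucc]
  · rw [removeNth_apply, succAbove_of_le_castSucc _ _ (succ_le_castSucc_iff.mpr hj),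
      succAbove_of_le_castSucc _ _ hj.le, succ_castSucc]

theorem removeNth_succ_last_of_eq (h : t i.castSucc = t i.succ) :
    removeNth i.succ t (last l) = t (last (l + 1)) := by
  rcases eq_or_ne i (last l) with rfl | hi
  · rw [removeNth_apply, succ_last, succAbove_last, ← succ_last, ← h]
  · rw [removeNth_apply, succAbove_ne_last_last]
    rwa [Ne, ← succ_last, succ_inj]

end Fin

section CompositionSeries

variable {G : Type*} [Group G]

noncomputable def oddFactor (A B : Subgroup G) : ℕ :=
  if Odd (A.relIndex B) then A.relIndex B else 1

theorem aProd_eq_prod_oddFactor (c : CompositionSeries' G) :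
    aProd c = ∏ i : Fin c.len, oddFactor (c.s i.castSucc) (c.s i.succ) := rfl

theorem oddFactor_self (A : Subgroup G) : oddFactor A A = 1 := by
  simp [oddFactor, Subgroup.relIndex_self]

theorem oddFactor_eq_of_mulEquiv {X : Type*} [Group X] {A B : Subgroup G} {S T : Subgroup X}
    [(A.subgroupOf B).Normal] [(S.subgroupOf T).Normal]
    (e : ↥B ⧸ A.subgroupOf B ≃* ↥T ⧸ S.subgroupOf T) : oddFactor A B = oddFactor S T := by
  unfold oddFactor Subgroup.relIndex Subgroup.index
  rw [Nat.card_congr e.toEquiv]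

structure IsCompositionStep (A B : Subgroup G) : Prop where
  le : A ≤ B
  normal : (A.subgroupOf B).Normal
  isSimpleGroup : haveI := normal; IsSimpleGroup (↥B ⧸ A.subgroupOf B)

theorem CompositionSeries'.isCompositionStep (c : CompositionSeries' G) (i : Fin c.len) :
    IsCompositionStep (c.s i.castSucc) (c.s i.succ) :=
  ⟨c.le_succ i, c.normal i, c.simple i⟩

theorem IsCompositionStep.of_mulEquiv {X : Type*} [Group X] {A B : Subgroup G}
    {S T : Subgroup X} (h : IsCompositionStep S T) (hAB : A ≤ B) [(A.subgroupOf B).Normal]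
    [(S.subgroupOf T).Normal] (e : ↥B ⧸ A.subgroupOf B ≃* ↥T ⧸ S.subgroupOf T) :
    IsCompositionStep A B :=
  have := h.isSimpleGroup
  ⟨hAB, ‹_›, e.isSimpleGroup⟩

theorem Subgroup.normal_map_subgroupOf_map {Q : Type*} [Group Q] (f : G →* Q)
    {S T : Subgroup G} (hST : S ≤ T) [(S.subgroupOf T).Normal] :
    ((S.map f).subgroupOf (T.map f)).Normal :=
  (normal_subgroupOf_iff_le_normalizer (map_mono hST)).mpr
    ((map_mono (le_normalizer_of_normal_subgroupOf hST)).trans (le_normalizer_map f))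

namespace IsCompositionStep

variable {S T : Subgroup G}

theorem inf_le_or_le_sup (h : IsCompositionStep S T) (K : Subgroup G) [hK : K.Normal] :
    T ⊓ K ≤ S ∨ T ≤ S ⊔ K := by
  have := h.normal
  have := h.isSimpleGroup
  -- the image of `T ⊓ K` in the simple group `T ⧸ S` is normal
  rcases ((hK.subgroupOf T).map _ (mk'_surjective (S.subgroupOf T))).eq_bot_or_eq_top
    with hbot | htop
  · refine Or.inl fun x ⟨hxT, hxK⟩ => ?_
    have hx := Subgroup.mem_map_of_mem (mk' (S.subgroupOf T))
      (show (⟨x, hxT⟩ : T) ∈ K.subgroupOf T from hxK)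
    rwa [hbot, Subgroup.mem_bot, mk'_apply, eq_one_iff] at hx
  · refine Or.inr fun t ht => ?_
    obtain ⟨k, hk, hkt⟩ := htop.ge (Subgroup.mem_top (mk' (S.subgroupOf T) ⟨t, ht⟩))
    rw [mk'_apply, mk'_apply, QuotientGroup.eq] at hkt
    rw [← mul_inv_cancel_left (k : G) t]
    exact mul_mem (Subgroup.mem_sup_right hk) (Subgroup.mem_sup_left hkt)

theorem map_of_inf_ker_le (h : IsCompositionStep S T) {Q : Type*} [Group Q] (f : G →* Q)
    (hf : T ⊓ f.ker ≤ S) :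
    IsCompositionStep (S.map f) (T.map f) ∧ oddFactor (S.map f) (T.map f) = oddFactor S T := by
  have := h.normal
  have := Subgroup.normal_map_subgroupOf_map f h.le
  let φ := (mk' ((S.map f).subgroupOf (T.map f))).comp (f.subgroupMap T)
  have hφ : Function.Surjective φ := (mk'_surjective _).comp (f.subgroupMap_surjective T)
  have hker : S.subgroupOf T = φ.ker := by
    ext ⟨t, ht⟩
    simp only [Subgroup.mem_subgroupOf, MonoidHom.mem_ker, φ, MonoidHom.comp_apply, mk'_apply,
      eq_one_iff]
    refine ⟨fun hs => Subgroup.mem_map_of_mem f hs, fun hft => ?_⟩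
    obtain ⟨s, hs, hst : f s = f t⟩ := Subgroup.mem_map.mp hft
    have : s⁻¹ * t ∈ T ⊓ f.ker := Subgroup.mem_inf.mpr
      ⟨mul_mem (inv_mem (h.le hs)) ht, by rw [MonoidHom.mem_ker, map_mul, map_inv, hst,
        inv_mul_cancel]⟩
    simpa using mul_mem hs (hf this)
  let e := liftEquiv _ hφ hker
  exact ⟨h.of_mulEquiv (Subgroup.map_mono h.le) e.symm, oddFactor_eq_of_mulEquiv e.symm⟩

theorem subgroupOf_of_le_sup (h : IsCompositionStep S T) (K : Subgroup G) [K.Normal]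
    (hT : T ≤ S ⊔ K) :
    IsCompositionStep (S.subgroupOf K) (T.subgroupOf K) ∧
      oddFactor (S.subgroupOf K) (T.subgroupOf K) = oddFactor S T := by
  have := h.normal
  let ι : ↥(T.subgroupOf K) →* ↥T :=
    (K.subtype.comp (T.subgroupOf K).subtype).codRestrict T fun x => x.2
  let φ := (mk' (S.subgroupOf T)).comp ι
  have hφ : Function.Surjective φ := by
    rintro ⟨t, ht⟩
    obtain ⟨k, hk, s, hs, rfl⟩ : t ∈ (K : Set G) * S := by
      rw [← Subgroup.normal_mul, sup_comm]; exact hT ht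
    have hkT : k ∈ T := by simpa using mul_mem ht (inv_mem (h.le hs))
    refine ⟨⟨⟨k, hk⟩, hkT⟩, (QuotientGroup.eq (s := S.subgroupOf T)).mpr ?_⟩
    change k⁻¹ * (k * s) ∈ S
    rwa [inv_mul_cancel_left]
  have hker : (S.subgroupOf K).subgroupOf (T.subgroupOf K) = φ.ker := by
    ext x
    simp only [MonoidHom.mem_ker, φ, MonoidHom.comp_apply, mk'_apply, eq_one_iff]
    exact Iff.rfl
  have : ((S.subgroupOf K).subgroupOf (T.subgroupOf K)).Normal := hker ▸ φ.normal_ker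
  let e := liftEquiv _ hφ hker
  exact ⟨h.of_mulEquiv (Subgroup.subgroupOf_mono _ h.le) e, oddFactor_eq_of_mulEquiv e⟩

theorem split (h : IsCompositionStep S T) (K : Subgroup G) [K.Normal] :
    (S.subgroupOf K = T.subgroupOf K ∨ IsCompositionStep (S.subgroupOf K) (T.subgroupOf K)) ∧
    (S.map (mk' K) = T.map (mk' K) ∨ IsCompositionStep (S.map (mk' K)) (T.map (mk' K))) ∧
    oddFactor (S.subgroupOf K) (T.subgroupOf K) * oddFactor (S.map (mk' K)) (T.map (mk' K)) =
      oddFactor S T := by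
  rcases h.inf_le_or_le_sup K with hle | hle
  · have hK : S.subgroupOf K = T.subgroupOf K := Subgroup.subgroupOf_inj.mpr <|
      le_antisymm (inf_le_inf_right K h.le) (le_inf hle inf_le_right)
    obtain ⟨hQ, hodd⟩ := h.map_of_inf_ker_le (mk' K) (by rwa [ker_mk'])
    exact ⟨.inl hK, .inr hQ, by rw [hK, oddFactor_self, one_mul, hodd]⟩
  · have hQ : S.map (mk' K) = T.map (mk' K) :=
      le_antisymm (Subgroup.map_mono h.le) <| Subgroup.map_le_iff_le_comap.mpr <| by
        rwa [Subgroup.comap_map_eq, ker_mk']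
    obtain ⟨hK, hodd⟩ := h.subgroupOf_of_le_sup K hle
    exact ⟨.inr hK, .inl hQ, by rw [hQ, oddFactor_self, mul_one, hodd]⟩

end IsCompositionStep

theorem exists_compositionSeries_aProd_eq {l : ℕ} (t : Fin (l + 1) → Subgroup G)
    (h0 : t 0 = ⊥) (hl : t (Fin.last l) = ⊤)
    (ht : ∀ i : Fin l, t i.castSucc = t i.succ ∨ IsCompositionStep (t i.castSucc) (t i.succ)) :
    ∃ c : CompositionSeries' G, aProd c = ∏ i : Fin l, oddFactor (t i.castSucc) (t i.succ) := by
  induction l with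
  | zero => exact ⟨⟨0, t, h0, hl, finZeroElim, finZeroElim, finZeroElim⟩, rfl⟩
  | succ l ih =>
    by_cases hrep : ∃ i : Fin (l + 1), t i.castSucc = t i.succ
    · obtain ⟨i, hi⟩ := hrep
      have hcast := Fin.removeNth_succ_castSucc_of_eq t i hi
      have hsucc (j : Fin l) : Fin.removeNth i.succ t j.succ = t (i.succAbove j).succ := by
        rw [Fin.removeNth_apply, Fin.succ_succAbove_succ]
      obtain ⟨c, hc⟩ := ih (Fin.removeNth i.succ t) (by simpa [Fin.removeNth_apply] using h0)
        (by rwa [Fin.removeNth_succ_last_of_eq t i hi])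
        (fun j => by rw [hcast, hsucc]; exact ht _)
      refine ⟨c, ?_⟩
      rw [hc, Fin.prod_univ_succAbove _ i, hi, oddFactor_self, one_mul]
      simp only [hcast, hsucc]
    · have hs i := (ht i).resolve_left fun h => hrep ⟨i, h⟩
      exact ⟨⟨l + 1, t, h0, hl, fun i => (hs i).le, fun i => (hs i).normal,
        fun i => (hs i).isSimpleGroup⟩, rfl⟩

theorem CompositionSeries'.exists_aProd_eq_mul (c : CompositionSeries' G) (K : Subgroup G)
    [K.Normal] :
    ∃ (cK : CompositionSeries' K) (cQ : CompositionSeries' (G ⧸ K)),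
      aProd c = aProd cK * aProd cQ := by
  have hsplit i := (c.isCompositionStep i).split K
  obtain ⟨cK, hcK⟩ := exists_compositionSeries_aProd_eq (fun i => (c.s i).subgroupOf K)
    (by simp [c.bot_eq]) (by simp [c.top_eq]) fun i => (hsplit i).1
  obtain ⟨cQ, hcQ⟩ := exists_compositionSeries_aProd_eq (fun i => (c.s i).map (mk' K))
    (by simp [c.bot_eq]) (by simp [c.top_eq, Subgroup.map_top_of_surjective _ (mk'_surjective K)])
    fun i => (hsplit i).2.1
  refine ⟨cK, cQ, ?_⟩
  rw [aProd_eq_prod_oddFactor, hcK, hcQ, ← Finset.prod_mul_distrib]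
  exact Finset.prod_congr rfl fun i _ => (hsplit i).2.2.symm

end CompositionSeries

section Action

variable {G Ω : Type*} [Group G] [MulAction G Ω]

def SubMulAction.ofSMulSubset (Γ : Set Ω) (h : ∀ g : G, g • Γ ⊆ Γ) : SubMulAction G Ω where
  carrier := Γ
  smul_mem' g _ hx := h g (Set.smul_mem_smul_set hx)

instance MulAction.quotientKerToPermHom (X : Type*) [MulAction G X] :
    MulAction (G ⧸ (MulAction.toPermHom G X).ker) X :=
  MulAction.compHom X (QuotientGroup.kerLift _)

instance (X : Type*) [MulAction G X] : FaithfulSMul (G ⧸ (MulAction.toPermHom G X).ker) X :=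
  ⟨fun h => QuotientGroup.kerLift_injective _ (Equiv.ext h)⟩

theorem faithfulSMul_ker_toPermHom [FaithfulSMul G Ω] {p q : SubMulAction G Ω}
    (hpq : ∀ x, x ∈ p ∨ x ∈ q) : FaithfulSMul (MulAction.toPermHom G p).ker q := by
  rw [faithfulSMul_iff]
  rintro ⟨g, hg⟩ hq
  ext1
  refine (faithfulSMul_iff.mp ‹_›) g fun x => ?_
  rcases hpq x with hx | hx
  · exact congr_arg Subtype.val (Equiv.ext_iff.mp hg ⟨x, hx⟩)
  · exact congr_arg Subtype.val (hq ⟨x, hx⟩)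

end Action

/-- Intransitive reduction step: if `G` acts faithfully on a finite set `Ω` which is a
disjoint union of nonempty `G`-invariant subsets `Γ₁`, `Γ₂` of sizes `n₁`, `n₂`, and if
`a(H) ≤ 2^(m-1)` for every group acting faithfully on a set of size `m < |Ω|`, then
`a(G) ≤ 2^(n₁-1) · 2^(n₂-1) = 2^(|Ω|-2)`. -/
theorem aProd_le_of_intransitive
    {G : Type u} {Ω : Type v} [Group G] [MulAction G Ω] [FaithfulSMul G Ω] [Fintype Ω]
    (Γ₁ Γ₂ : Set Ω) (hne₁ : Γ₁.Nonempty) (hne₂ : Γ₂.Nonempty)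
    (hdisj : Disjoint Γ₁ Γ₂) (hunion : Γ₁ ∪ Γ₂ = Set.univ)
    (hinv₁ : ∀ g : G, g • Γ₁ = Γ₁) (hinv₂ : ∀ g : G, g • Γ₂ = Γ₂)
    {n₁ n₂ : ℕ} (hn₁ : n₁ = Nat.card Γ₁) (hn₂ : n₂ = Nat.card Γ₂)
    (hind : ∀ (H : Type u) (X : Type v) [Group H] [Fintype X] [MulAction H X],
      FaithfulSMul H X → Fintype.card X < Fintype.card Ω →
      ∀ c : CompositionSeries' H, aProd c ≤ 2 ^ (Fintype.card X - 1)) :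
    (∀ c : CompositionSeries' G, aProd c ≤ 2 ^ (n₁ - 1) * 2 ^ (n₂ - 1)) ∧
      2 ^ (n₁ - 1) * 2 ^ (n₂ - 1) = 2 ^ (Fintype.card Ω - 2) := by
  have hcard : n₁ + n₂ = Fintype.card Ω := by
    rw [hn₁, hn₂, Nat.card_coe_set_eq, Nat.card_coe_set_eq, ← Set.ncard_union_eq hdisj,
      hunion, Set.ncard_univ, Nat.card_eq_fintype_card]
  have hpos₁ : 0 < n₁ := hn₁ ▸ have := hne₁.to_subtype; Nat.card_pos
  have hpos₂ : 0 < n₂ := hn₂ ▸ have := hne₂.to_subtype; Nat.card_pos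
  refine ⟨fun c => ?_, by rw [← pow_add]; congr 1; omega⟩
  let p₁ := SubMulAction.ofSMulSubset Γ₁ fun g => (hinv₁ g).subset
  let p₂ := SubMulAction.ofSMulSubset Γ₂ fun g => (hinv₂ g).subset
  let K := (MulAction.toPermHom G p₁).ker
  have hK : FaithfulSMul K p₂ := faithfulSMul_ker_toPermHom fun x =>
    (hunion ▸ Set.mem_univ x : x ∈ Γ₁ ∪ Γ₂)
  have : Fintype p₁ := Fintype.ofFinite _
  have : Fintype p₂ := Fintype.ofFinite _
  have hc₁ : Fintype.card p₁ = n₁ := by rw [hn₁, Fintype.card_eq_nat_card]; rfl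
  have hc₂ : Fintype.card p₂ = n₂ := by rw [hn₂, Fintype.card_eq_nat_card]; rfl
  obtain ⟨cK, cQ, hc⟩ := c.exists_aProd_eq_mul K
  calc aProd c = aProd cQ * aProd cK := by rw [hc, mul_comm]
    _ ≤ 2 ^ (n₁ - 1) * 2 ^ (n₂ - 1) := by
      rw [← hc₁, ← hc₂]
      exact Nat.mul_le_mul (hind _ _ inferInstance (by omega) cQ) (hind _ _ hK (by omega) cK)
end

section
/- Let G be a group acting faithfully and transitively but imprimitively on a finite set Ω of size n, with a nontrivial system of blocks Ω = Ω₁ ∪ … ∪ Ω_r where each block has size m and n = mr, with 1 < m < n. Let K be the kernel of the induced action of G on the set of blocks. If a(H) ≤ 2^(k-1) for every group H acting faithfully on a set of size k < n, then a(G) = a(G/K) · ∏_{i=1}^{r} a(K_{i-1}/K_i) ≤ 2^(r-1) · (2^(m-1))^r ≤ 2^(n-1), where K₀ = K and K_{i+1} = {g ∈ K_i : g acts trivially on Ω_{i+1}}. -/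
open scoped Pointwise

/-!
The chain `⊥ = K r ≤ … ≤ K 1 ≤ K 0 ⊴ G` is subnormal (`K r` fixes every point, and the action
is faithful), so lifting composition series of `G ⧸ K 0` and of the `K i ⧸ K (i+1)` gives a
composition series of `G`; by Jordan–Hölder, `a(G)` is the product of the `a` of these
quotients. `G ⧸ K 0` acts faithfully on the at most `r` blocks and `K i ⧸ K (i+1)` on the `m`
points of `B i`, so the hypothesis bounds the factors by `2^(r-1)` and `2^(m-1)`, and
`(r - 1) + r (m - 1) = n - 1`.
-/
namespace Subgroup

variable {G Q : Type*} [Group G] [Group Q]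

def IsMaximalNormal (N : Subgroup G) : Prop :=
  ∃ _ : N.Normal, IsSimpleGroup (G ⧸ N)

lemma isMaximalNormal_ker {f : G →* Q} (hf : Function.Surjective f) [IsSimpleGroup Q] :
    f.ker.IsMaximalNormal :=
  ⟨f.normal_ker, (QuotientGroup.quotientKerEquivOfSurjective f hf).isSimpleGroup⟩

namespace IsMaximalNormal

variable {N M : Subgroup G}

lemma ne_top (hN : N.IsMaximalNormal) : N ≠ ⊤ := by
  obtain ⟨_, _⟩ := hN
  rintro rfl
  exact not_subsingleton (G ⧸ (⊤ : Subgroup G)) QuotientGroup.subsingleton_quotient_top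

lemma eq_or_eq_top (hN : N.IsMaximalNormal) [hM : M.Normal] (hNM : N ≤ M) :
    M = N ∨ M = ⊤ := by
  obtain ⟨_, _⟩ := hN
  rcases (hM.map _ (QuotientGroup.mk'_surjective N)).eq_bot_or_eq_top with h | h
  · rw [map_eq_bot_iff, QuotientGroup.ker_mk'] at h
    exact .inl (le_antisymm h hNM)
  · have := congrArg (comap (QuotientGroup.mk' N)) h
    rw [comap_map_eq, QuotientGroup.ker_mk', sup_eq_left.mpr hNM, comap_top] at this
    exact .inr this

lemma sup_eq_top (hN : N.IsMaximalNormal) (hM : M.IsMaximalNormal) (hNM : N ≠ M) :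
    N ⊔ M = ⊤ := by
  have := hN.fst
  have := hM.fst
  rcases hN.eq_or_eq_top (M := N ⊔ M) le_sup_left with hN' | h
  · rcases hM.eq_or_eq_top (M := N ⊔ M) le_sup_right with hM' | h
    · exact absurd (hN'.symm.trans hM') hNM
    · exact h
  · exact h

lemma comap {f : Q →* G} (hf : Function.Surjective f) (hN : N.IsMaximalNormal) :
    (N.comap f).IsMaximalNormal := by
  obtain ⟨_, _⟩ := hN
  rw [← QuotientGroup.ker_mk' N, MonoidHom.comap_ker]
  exact isMaximalNormal_ker ((QuotientGroup.mk'_surjective N).comp hf)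

end IsMaximalNormal

def IsMaximalNormalIn (A B : Subgroup G) : Prop :=
  A ≤ B ∧ (A.subgroupOf B).IsMaximalNormal

namespace IsMaximalNormalIn

variable {A B C : Subgroup G}

lemma lt (h : A.IsMaximalNormalIn B) : A < B :=
  lt_of_le_of_ne h.1 fun hAB => h.2.ne_top (hAB ▸ subgroupOf_self A)

lemma sup_eq (hA : A.IsMaximalNormalIn C) (hB : B.IsMaximalNormalIn C) (hAB : A ≠ B) :
    A ⊔ B = C := by
  refine le_antisymm (sup_le hA.1 hB.1) (subgroupOf_eq_top.mp ?_)
  rw [subgroupOf_sup hA.1 hB.1]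
  refine hA.2.sup_eq_top hB.2 fun h => hAB ?_
  rwa [subgroupOf_inj, inf_eq_left.mpr hA.1, inf_eq_left.mpr hB.1] at h

lemma inf_left (hB : B.IsMaximalNormalIn (A ⊔ B)) : (A ⊓ B).IsMaximalNormalIn A := by
  obtain ⟨hBle, hBnormal, _⟩ := hB
  have hA : A ≤ normalizer B := le_sup_left.trans (le_normalizer_of_normal_subgroupOf hBle)
  refine ⟨inf_le_left, ?_⟩
  rw [inf_subgroupOf_left]
  have := normal_subgroupOf_of_le_normalizer hA
  exact ⟨this, (QuotientGroup.quotientInfEquivProdNormalizerQuotient A B hA).isSimpleGroup⟩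

lemma comap {f : Q →* G} (hf : Function.Surjective f) (h : A.IsMaximalNormalIn B) :
    (A.comap f).IsMaximalNormalIn (B.comap f) := by
  refine ⟨comap_mono h.1, ?_⟩
  have : (A.comap f).subgroupOf (B.comap f) = (A.subgroupOf B).comap (f.subgroupComap B) := rfl
  rw [this]
  exact h.2.comap (f.subgroupComap_surjective_of_surjective B hf)

lemma map {f : G →* Q} (hf : Function.Injective f) (h : A.IsMaximalNormalIn B) :
    (A.map f).IsMaximalNormalIn (B.map f) := by
  refine ⟨map_mono h.1, ?_⟩
  have : (A.map f).subgroupOf (B.map f) =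
      (A.subgroupOf B).comap (B.equivMapOfInjective f hf).symm.toMonoidHom := by
    ext ⟨_, b, hb, rfl⟩
    have : (B.equivMapOfInjective f hf).symm ⟨f b, _⟩ = ⟨b, hb⟩ :=
      (MulEquiv.symm_apply_eq _).mpr rfl
    simp [mem_subgroupOf, mem_map_iff_mem hf, this]
  rw [this]
  exact h.2.comap (B.equivMapOfInjective f hf).symm.surjective

end IsMaximalNormalIn

lemma relIndex_sup_left_of_subgroupOf_normal {A B : Subgroup G}
    (hA : (A.subgroupOf (A ⊔ B)).Normal) : A.relIndex (A ⊔ B) = A.relIndex B := by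
  have hB : B ≤ normalizer A :=
    le_sup_right.trans (le_normalizer_of_normal_subgroupOf le_sup_left)
  have := normal_subgroupOf_of_le_normalizer hB
  have := normal_subgroupOf_sup_of_le_normalizer hB
  rw [sup_comm]
  exact (Nat.card_congr (QuotientGroup.quotientInfEquivProdNormalizerQuotient B A hB).toEquiv).symm

-- `Subgroup G` is not modular, so Mathlib's instance for modular lattices does not apply.
instance : JordanHolderLattice (Subgroup G) where
  IsMaximal := IsMaximalNormalIn
  lt_of_isMaximal := IsMaximalNormalIn.lt
  sup_eq_of_isMaximal := IsMaximalNormalIn.sup_eq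
  isMaximal_inf_left_of_isMaximal_sup _ := IsMaximalNormalIn.inf_left

end Subgroup

namespace RelSeries

variable {α β M : Type*} {r : SetRel α α} {s : SetRel β β} [CommMonoid M]

def prodSteps (φ : α → α → M) (p : RelSeries r) : M :=
  ∏ i : Fin p.length, φ (p i.castSucc) (p i.succ)

variable (φ : α → α → M)

lemma prodSteps_singleton (a : α) : (singleton r a).prodSteps φ = 1 :=
  Finset.prod_empty

lemma prodSteps_smash {p q : RelSeries r} (h : p.last = q.head) :
    (smash p q h).prodSteps φ = p.prodSteps φ * q.prodSteps φ := by
  change ∏ i : Fin (p.length + q.length), _ = _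
  rw [Fin.prod_univ_add]
  congr 1 <;> refine Finset.prod_congr rfl fun i _ => ?_
  · exact congrArg₂ φ (smash_castAdd h i) (smash_succ_castAdd h i)
  · exact congrArg₂ φ (smash_natAdd h i) (smash_succ_natAdd h i)

lemma prodSteps_map (p : RelSeries r) (f : r.Hom s) {ψ : β → β → M}
    (hf : ∀ a b, (a, b) ∈ r → ψ (f a) (f b) = φ a b) :
    (p.map f).prodSteps ψ = p.prodSteps φ :=
  Finset.prod_congr rfl fun i _ => hf _ _ (p.step i)

lemma exists_prodSteps_eq_prod_of_chain {n : ℕ} (a : Fin (n + 1) → α)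
    (p : Fin n → RelSeries r) (hhead : ∀ i, (p i).head = a i.succ)
    (hlast : ∀ i, (p i).last = a i.castSucc) :
    ∃ q : RelSeries r, q.head = a (Fin.last n) ∧ q.last = a 0 ∧
      q.prodSteps φ = ∏ i, (p i).prodSteps φ := by
  induction n with
  | zero => exact ⟨singleton r (a 0), rfl, rfl, by rw [prodSteps_singleton, Fin.prod_univ_zero]⟩
  | succ n ih =>
    obtain ⟨q, hq_head, hq_last, hq⟩ := ih (fun j => a j.succ) (fun i => p i.succ)
      (fun i => hhead i.succ) (fun i => by rw [hlast, Fin.succ_castSucc])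
    refine ⟨smash q (p 0) (by rw [hq_last, hhead]), by rw [head_smash, hq_head, Fin.succ_last],
      by rw [last_smash, hlast]; rfl, ?_⟩
    rw [prodSteps_smash, hq, Fin.prod_univ_succ, mul_comm]

end RelSeries

lemma CompositionSeries.prodSteps_eq_of_equivalent {X M : Type*} [Lattice X]
    [JordanHolderLattice X] [CommMonoid M] {φ : X → X → M}
    (hφ : ∀ x y, JordanHolderLattice.IsMaximal x (x ⊔ y) → φ x (x ⊔ y) = φ (x ⊓ y) y)
    {s t : CompositionSeries X} (h : s.Equivalent t) : s.prodSteps φ = t.prodSteps φ := by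
  obtain ⟨e, he⟩ := h
  have hiso : ∀ {p q : X × X}, JordanHolderLattice.Iso p q → φ p.1 p.2 = φ q.1 q.2 :=
    JordanHolderLattice.Iso.rel (fun p q => φ p.1 p.2 = φ q.1 q.2) rfl Eq.symm Eq.trans (hφ _ _)
  exact Fintype.prod_equiv e _ _ fun i => hiso (he i)

namespace CompositionSeries

variable {G Q M : Type*} [Group G] [Group Q] [CommMonoid M]

def comapOfSurjective (s : CompositionSeries (Subgroup Q)) (f : G →* Q)
    (hf : Function.Surjective f) : CompositionSeries (Subgroup G) :=
  s.map ⟨Subgroup.comap f, fun h => Subgroup.IsMaximalNormalIn.comap hf h⟩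

def mapOfInjective (s : CompositionSeries (Subgroup G)) (f : G →* Q)
    (hf : Function.Injective f) : CompositionSeries (Subgroup Q) :=
  s.map ⟨Subgroup.map f, fun h => Subgroup.IsMaximalNormalIn.map hf h⟩

variable (g : ℕ → M)

lemma prodSteps_relIndex_comapOfSurjective (s : CompositionSeries (Subgroup Q)) (f : G →* Q)
    (hf : Function.Surjective f) :
    (s.comapOfSurjective f hf).prodSteps (fun A B => g (A.relIndex B)) =
      s.prodSteps (fun A B => g (A.relIndex B)) :=
  s.prodSteps_map _ _ fun A B _ => by
    change g ((A.comap f).relIndex (B.comap f)) = _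
    rw [Subgroup.relIndex_comap, Subgroup.map_comap_eq_self_of_surjective hf]

lemma prodSteps_relIndex_mapOfInjective (s : CompositionSeries (Subgroup G)) (f : G →* Q)
    (hf : Function.Injective f) :
    (s.mapOfInjective f hf).prodSteps (fun A B => g (A.relIndex B)) =
      s.prodSteps (fun A B => g (A.relIndex B)) :=
  s.prodSteps_map _ _ fun A B _ => congrArg g (Subgroup.relIndex_map_map_of_injective A B hf)

lemma prodSteps_relIndex_eq_of_equivalent {s t : CompositionSeries (Subgroup G)}
    (h : s.Equivalent t) :
    s.prodSteps (fun A B => g (A.relIndex B)) = t.prodSteps (fun A B => g (A.relIndex B)) :=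
  prodSteps_eq_of_equivalent (fun A B hA => by
    rw [Subgroup.relIndex_sup_left_of_subgroupOf_normal hA.2.fst, Subgroup.inf_relIndex_right]) h

end CompositionSeries

def oddPart (n : ℕ) : ℕ := if Odd n then n else 1

namespace CompositionSeries'

variable {G : Type*} [Group G]

def toCompositionSeries (c : CompositionSeries' G) : CompositionSeries (Subgroup G) where
  length := c.len
  toFun := c.s
  step i := ⟨c.le_succ i, c.normal i, c.simple i⟩

-- `A.relIndex B` unfolds to `Nat.card (↥B ⧸ A.subgroupOf B)`, so `aProd c` is literally the
-- product over `c.toCompositionSeries`.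
lemma aProd_eq_prodSteps (c : CompositionSeries' G) {s : CompositionSeries (Subgroup G)}
    (hs_head : s.head = ⊥) (hs_last : s.last = ⊤) :
    aProd c = s.prodSteps fun A B => oddPart (A.relIndex B) :=
  CompositionSeries.prodSteps_relIndex_eq_of_equivalent oddPart <|
    CompositionSeries.jordan_holder c.toCompositionSeries s (c.bot_eq.trans hs_head.symm)
      (c.top_eq.trans hs_last.symm)

lemma exists_prodSteps_eq_aProd_quotient (N : Subgroup G) [N.Normal]
    (c : CompositionSeries' (G ⧸ N)) :
    ∃ s : CompositionSeries (Subgroup G), s.head = N ∧ s.last = ⊤ ∧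
      s.prodSteps (fun A B => oddPart (A.relIndex B)) = aProd c := by
  refine ⟨c.toCompositionSeries.comapOfSurjective _ (QuotientGroup.mk'_surjective N), ?_, ?_,
    CompositionSeries.prodSteps_relIndex_comapOfSurjective _ _ _ _⟩
  · change (c.s 0).comap _ = N
    rw [c.bot_eq, MonoidHom.comap_bot, QuotientGroup.ker_mk']
  · change (c.s (Fin.last c.len)).comap _ = ⊤
    rw [c.top_eq, Subgroup.comap_top]

lemma exists_prodSteps_eq_aProd_subquotient {A B : Subgroup G} (hAB : A ≤ B)
    [(A.subgroupOf B).Normal] (c : CompositionSeries' (↥B ⧸ A.subgroupOf B)) :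
    ∃ s : CompositionSeries (Subgroup G), s.head = A ∧ s.last = B ∧
      s.prodSteps (fun A B => oddPart (A.relIndex B)) = aProd c := by
  obtain ⟨s, hs_head, hs_last, hs⟩ := exists_prodSteps_eq_aProd_quotient _ c
  refine ⟨s.mapOfInjective B.subtype B.subtype_injective, ?_, ?_,
    (CompositionSeries.prodSteps_relIndex_mapOfInjective _ _ _ _).trans hs⟩
  · change s.head.map _ = A
    rw [hs_head, Subgroup.subgroupOf_map_subtype, inf_eq_left.mpr hAB]
  · change s.last.map _ = B
    rw [hs_last, ← MonoidHom.range_eq_map, Subgroup.range_subtype]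

end CompositionSeries'

lemma exists_faithfulSMul_quotient_of_invariant {G Y : Type*} [Group G] [MulAction G Y]
    (S : Set Y) (hS : ∀ g : G, ∀ y ∈ S, g • y ∈ S) (N : Subgroup G) [N.Normal]
    (hN : ∀ g, g ∈ N ↔ ∀ y ∈ S, g • y = y) :
    ∃ _ : MulAction (G ⧸ N) S, FaithfulSMul (G ⧸ N) S := by
  let p : SubMulAction G Y := ⟨S, fun g _ hy => hS g _ hy⟩
  let σ := MulAction.toPermHom G p
  obtain rfl : σ.ker = N := by
    ext g
    rw [MonoidHom.mem_ker, hN, Equiv.ext_iff]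
    exact ⟨fun h y hy => congrArg Subtype.val (h ⟨y, hy⟩), fun h y => Subtype.ext (h y y.2)⟩
  let _ : MulAction (G ⧸ σ.ker) S := MulAction.compHom p (QuotientGroup.kerLift σ)
  exact ⟨‹_›, ⟨fun h => QuotientGroup.kerLift_injective σ (Equiv.ext h)⟩⟩

section Blocks

variable {G Ω : Type*} [Group G] [MulAction G Ω]

lemma exists_faithfulSMul_quotient_range {r : ℕ} (B : Fin r → Set Ω)
    (hB : ∀ (g : G) (i : Fin r), ∃ j, g • B i = B j) (N : Subgroup G) [N.Normal]
    (hN : ∀ g : G, g ∈ N ↔ ∀ i, g • B i = B i) :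
    ∃ _ : MulAction (G ⧸ N) (Set.range B), FaithfulSMul (G ⧸ N) (Set.range B) := by
  refine exists_faithfulSMul_quotient_of_invariant _ ?_ N (by simpa only [Set.forall_mem_range])
  rintro g _ ⟨i, rfl⟩
  obtain ⟨j, hj⟩ := hB g i
  exact ⟨j, hj.symm⟩

lemma exists_faithfulSMul_quotient_subgroupOf (S : Set Ω) (L N : Subgroup G)
    [(N.subgroupOf L).Normal] (hL : ∀ g ∈ L, g • S = S)
    (hN : ∀ g, g ∈ N ↔ g ∈ L ∧ ∀ x ∈ S, g • x = x) :
    ∃ _ : MulAction (↥L ⧸ N.subgroupOf L) S, FaithfulSMul (↥L ⧸ N.subgroupOf L) S := by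
  refine exists_faithfulSMul_quotient_of_invariant (G := L) S (fun g x hx => ?_) _ fun g => ?_
  · rw [← hL g g.2]
    exact Set.smul_mem_smul_set hx
  · simp [Subgroup.mem_subgroupOf, hN, Subgroup.smul_def]

end Blocks

lemma pow_sub_one_mul_pow_sub_one_pow {M : Type*} [Monoid M] (a : M) {m r : ℕ} (hm : 0 < m)
    (hr : 0 < r) : a ^ (r - 1) * (a ^ (m - 1)) ^ r = a ^ (m * r - 1) := by
  rw [← pow_mul, ← pow_add]
  congr 1
  have : r ≤ m * r := Nat.le_mul_of_pos_left r hm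
  rw [Nat.sub_mul, one_mul]
  omega

theorem aProd_eq_mul_prod_of_chain {G : Type*} [Group G] {r : ℕ} (K : Fin (r + 1) → Subgroup G)
    (hKle : ∀ i : Fin r, K i.succ ≤ K i.castSucc) (hKlast : K (Fin.last r) = ⊥) [(K 0).Normal]
    (hKnorm : ∀ i : Fin r, ((K i.succ).subgroupOf (K i.castSucc)).Normal)
    (cG : CompositionSeries' G) (cQ : CompositionSeries' (G ⧸ K 0))
    (cK : ∀ i : Fin r,
      haveI := hKnorm i
      CompositionSeries' (↥(K i.castSucc) ⧸ (K i.succ).subgroupOf (K i.castSucc))) :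
    aProd cG = aProd cQ * ∏ i, aProd (cK i) := by
  choose s hs_head hs_last hs using fun i =>
    haveI := hKnorm i
    CompositionSeries'.exists_prodSteps_eq_aProd_subquotient (hKle i) (cK i)
  obtain ⟨t, ht_head, ht_last, ht⟩ := RelSeries.exists_prodSteps_eq_prod_of_chain
    (fun A B => oddPart (A.relIndex B)) K s hs_head hs_last
  obtain ⟨sQ, hsQ_head, hsQ_last, hsQ⟩ :=
    CompositionSeries'.exists_prodSteps_eq_aProd_quotient (K 0) cQ
  rw [cG.aProd_eq_prodSteps (s := t.smash sQ (ht_last.trans hsQ_head.symm))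
    (by rw [RelSeries.head_smash, ht_head, hKlast]) (by rw [RelSeries.last_smash, hsQ_last]),
    RelSeries.prodSteps_smash, ht, hsQ, mul_comm]
  exact congrArg _ (Finset.prod_congr rfl fun i _ => hs i)

theorem aProd_le_of_imprimitive_general
    {G : Type u} {Ω : Type v} [Group G] [MulAction G Ω] [FaithfulSMul G Ω] [Fintype Ω]
    {r m : ℕ} (hm : 1 < m) (hmn : m < Fintype.card Ω) (hn : Fintype.card Ω = m * r)
    (B : Fin r → Set Ω) (hcover : (⋃ i, B i) = Set.univ)
    (hcard : ∀ i, Nat.card (B i) = m)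
    (hblocks : ∀ (g : G) (i : Fin r), ∃ j, g • B i = B j)
    (K : Fin (r + 1) → Subgroup G)
    (hK0 : ∀ g : G, g ∈ K 0 ↔ ∀ i, g • B i = B i)
    (hKsucc : ∀ (i : Fin r) (g : G),
      g ∈ K i.succ ↔ g ∈ K i.castSucc ∧ ∀ x ∈ B i, g • x = x)
    [hK0norm : (K 0).Normal]
    (hKnorm : ∀ i : Fin r, ((K i.succ).subgroupOf (K i.castSucc)).Normal)
    (hind : ∀ (H : Type u) (X : Type v) [Group H] [Fintype X] [MulAction H X],
      FaithfulSMul H X → Fintype.card X < Fintype.card Ω →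
      ∀ c : CompositionSeries' H, aProd c ≤ 2 ^ (Fintype.card X - 1))
    (cG : CompositionSeries' G) (cQ : CompositionSeries' (G ⧸ K 0))
    (cK : ∀ i : Fin r,
      haveI := hKnorm i
      CompositionSeries' (↥(K i.castSucc) ⧸ (K i.succ).subgroupOf (K i.castSucc))) :
    (aProd cG = aProd cQ * ∏ i : Fin r, aProd (cK i)) ∧
      (aProd cG ≤ 2 ^ (r - 1) * (2 ^ (m - 1)) ^ r) ∧
      (2 ^ (r - 1) * (2 ^ (m - 1)) ^ r ≤ 2 ^ (Fintype.card Ω - 1)) := by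
  classical
  have hr : 0 < r := Nat.pos_of_ne_zero fun hr => by simp [hr] at hn; omega
  have hKle : ∀ i : Fin r, K i.succ ≤ K i.castSucc := fun i g hg => ((hKsucc i g).mp hg).1
  have hanti : Antitone K := Fin.antitone_iff_succ_le.mpr hKle
  have hKlast : K (Fin.last r) = ⊥ := by
    refine (Subgroup.eq_bot_iff_forall _).mpr fun g hg =>
      FaithfulSMul.eq_of_smul_eq_smul (α := Ω) fun x => ?_
    obtain ⟨i, hi⟩ := Set.mem_iUnion.mp (hcover ▸ Set.mem_univ x)
    exact ((hKsucc i g).mp (hanti (Fin.le_last _) hg)).2 x hi |>.trans (one_smul G x).symm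
  have hfactor := aProd_eq_mul_prod_of_chain K hKle hKlast hKnorm cG cQ cK
  have hQ : aProd cQ ≤ 2 ^ (r - 1) := by
    obtain ⟨_, hfaith⟩ := exists_faithfulSMul_quotient_range B hblocks (K 0) hK0
    have hX : Fintype.card (Set.range B) ≤ r := (Fintype.card_range_le B).trans_eq (by simp)
    exact (hind _ _ hfaith (by nlinarith) cQ).trans (Nat.pow_le_pow_right two_pos (by omega))
  have hK : ∀ i, aProd (cK i) ≤ 2 ^ (m - 1) := fun i => by
    have := hKnorm i
    obtain ⟨_, hfaith⟩ := exists_faithfulSMul_quotient_subgroupOf (B i) _ _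
      (fun g hg => (hK0 g).mp (hanti (Fin.zero_le _) hg) i) (hKsucc i)
    have hB : Fintype.card (B i) = m := Nat.card_eq_fintype_card.symm.trans (hcard i)
    simpa only [hB] using hind _ _ hfaith (hB ▸ hmn) (cK i)
  refine ⟨hfactor, hfactor ▸ Nat.mul_le_mul hQ ?_, ?_⟩
  · simpa using Finset.prod_le_pow_card Finset.univ _ _ fun i _ => hK i
  · rw [hn, pow_sub_one_mul_pow_sub_one_pow 2 (by omega) hr]

/-- Imprimitive reduction step: let `G` act faithfully and transitively on a finite set
`Ω` of size `n = m · r`, with a nontrivial block system `B : Fin r → Set Ω` of blocks of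
size `m` (`1 < m < n`) permuted by `G`.  Let `K 0` be the kernel of the action on the
blocks and `K (i+1) = {g ∈ K i : g acts trivially on B i}`.  If `a(H) ≤ 2^(k-1)` for
every group acting faithfully on a set of size `k < n`, then
`a(G) = a(G / K 0) · ∏ i, a(K i / K (i+1)) ≤ 2^(r-1) · (2^(m-1))^r ≤ 2^(n-1)`. -/
theorem aProd_le_of_imprimitive
    {G : Type u} {Ω : Type v} [Group G] [MulAction G Ω] [FaithfulSMul G Ω] [Fintype Ω]
    [MulAction.IsPretransitive G Ω]
    {r m : ℕ} (hm : 1 < m) (hmn : m < Fintype.card Ω) (hn : Fintype.card Ω = m * r)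
    (B : Fin r → Set Ω) (hcover : (⋃ i, B i) = Set.univ)
    (hdisj : Pairwise (Function.onFun Disjoint B))
    (hcard : ∀ i, Nat.card (B i) = m)
    (hblocks : ∀ (g : G) (i : Fin r), ∃ j, g • B i = B j)
    (K : Fin (r + 1) → Subgroup G)
    (hK0 : ∀ g : G, g ∈ K 0 ↔ ∀ i, g • B i = B i)
    (hKsucc : ∀ (i : Fin r) (g : G),
      g ∈ K i.succ ↔ g ∈ K i.castSucc ∧ ∀ x ∈ B i, g • x = x)
    [hK0norm : (K 0).Normal]
    (hKle : ∀ i : Fin r, K i.succ ≤ K i.castSucc)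
    (hKnorm : ∀ i : Fin r, ((K i.succ).subgroupOf (K i.castSucc)).Normal)
    (hind : ∀ (H : Type u) (X : Type v) [Group H] [Fintype X] [MulAction H X],
      FaithfulSMul H X → Fintype.card X < Fintype.card Ω →
      ∀ c : CompositionSeries' H, aProd c ≤ 2 ^ (Fintype.card X - 1))
    (cG : CompositionSeries' G) (cQ : CompositionSeries' (G ⧸ K 0))
    (cK : ∀ i : Fin r,
      haveI := hKnorm i
      CompositionSeries' (↥(K i.castSucc) ⧸ (K i.succ).subgroupOf (K i.castSucc))) :
    (aProd cG = aProd cQ * ∏ i : Fin r, aProd (cK i)) ∧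
      (aProd cG ≤ 2 ^ (r - 1) * (2 ^ (m - 1)) ^ r) ∧
      (2 ^ (r - 1) * (2 ^ (m - 1)) ^ r ≤ 2 ^ (Fintype.card Ω - 1)) :=
  aProd_le_of_imprimitive_general hm hmn hn B hcover hcard hblocks K hK0 hKsucc (hK0norm := hK0norm)
    hKnorm hind cG cQ cK
end
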